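/- arXiv:2309.12235 — 3 statements merged into one kernel-verified Lean document; each statement's English description precedes it below -/
import Mathlib

section
/- Let λ ∈ (0,1) and let (ν^(k))_{k≥0} and (ω^(k))_{k≥0} be nonnegative real sequences satisfying ν^(k+1) ≤ λ·ν^(k) + ω^(k) for all k ≥ 0. Then for every k ≥ 0, sqrt(Σ_{l=0}^{k+1} (ν^(l))²) ≤ (√2/(1−λ))·sqrt(Σ_{l=0}^{k} (ω^(l))²) + ν^(0)·sqrt(2/(1−λ²)). -/
open scoped BigOperators

private lemma geom_le_one_div {x : ℝ} (hx0 : 0 ≤ x) (hx1 : x < 1) (n : ℕ) :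
    ∑ i ∈ Finset.range n, x ^ i ≤ 1 / (1 - x) := by
  have h1 : (0:ℝ) < 1 - x := by linarith
  rw [geom_sum_eq (ne_of_lt hx1)]
  have h2 : (x ^ n - 1) / (x - 1) = (1 - x ^ n) / (1 - x) := by
    rw [← neg_div_neg_eq]; ring_nf
  rw [h2]
  have hpn : (0:ℝ) ≤ x ^ n := pow_nonneg hx0 n
  gcongr
  linarith

private lemma sqrt_add_le' {a b : ℝ} (ha : 0 ≤ a) (hb : 0 ≤ b) :
    Real.sqrt (a + b) ≤ Real.sqrt a + Real.sqrt b := by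
  rw [show a + b = Real.sqrt a ^ 2 + Real.sqrt b ^ 2 by
    rw [Real.sq_sqrt ha, Real.sq_sqrt hb]]
  have h := Real.sqrt_le_sqrt (show Real.sqrt a ^ 2 + Real.sqrt b ^ 2 ≤
      (Real.sqrt a + Real.sqrt b) ^ 2 by nlinarith [Real.sqrt_nonneg a, Real.sqrt_nonneg b])
  refine h.trans_eq ?_
  exact Real.sqrt_sq (by positivity)

/-- Geometric-recursion lemma: if `ν^(k+1) ≤ λ·ν^(k) + ω^(k)` with `λ ∈ (0,1)` and both
sequences nonnegative, then
`sqrt(Σ_{l=0}^{k+1} ν(l)²) ≤ (√2/(1−λ))·sqrt(Σ_{l=0}^{k} ω(l)²) + ν(0)·sqrt(2/(1−λ²))`. -/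
theorem stmt0 (lam : ℝ) (hlam : lam ∈ Set.Ioo (0 : ℝ) 1)
    (ν ω : ℕ → ℝ) (hν : ∀ k, 0 ≤ ν k) (hω : ∀ k, 0 ≤ ω k)
    (hrec : ∀ k, ν (k + 1) ≤ lam * ν k + ω k) :
    ∀ k, Real.sqrt (∑ l ∈ Finset.range (k + 2), (ν l) ^ 2) ≤
      (Real.sqrt 2 / (1 - lam)) * Real.sqrt (∑ l ∈ Finset.range (k + 1), (ω l) ^ 2)
        + ν 0 * Real.sqrt (2 / (1 - lam ^ 2)) := by
  obtain ⟨hl0, hl1⟩ := hlam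
  have h1lam : (0:ℝ) < 1 - lam := by linarith
  have h1lam2 : (0:ℝ) < 1 - lam ^ 2 := by nlinarith
  set c : ℕ → ℝ := fun l => ∑ j ∈ Finset.range l, lam ^ (l - 1 - j) * ω j with hc
  -- pointwise bound
  have hpt : ∀ l, ν l ≤ lam ^ l * ν 0 + c l := by
    intro l
    induction l with
    | zero => simp [hc]
    | succ n ih =>
      have : ν (n + 1) ≤ lam * ν n + ω n := hrec n
      have h2 : lam * ν n ≤ lam * (lam ^ n * ν 0 + c n) := by
        exact mul_le_mul_of_nonneg_left ih (le_of_lt hl0)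
      have h3 : lam * c n = ∑ j ∈ Finset.range n, lam ^ (n - j) * ω j := by
        rw [hc, Finset.mul_sum]
        apply Finset.sum_congr rfl
        intro j hj
        rw [Finset.mem_range] at hj
        rw [← mul_assoc, ← pow_succ']
        congr 2
        omega
      have h4 : c (n + 1) = (∑ j ∈ Finset.range n, lam ^ (n - j) * ω j) + ω n := by
        simp only [hc]
        rw [Finset.sum_range_succ]
        simp only [Nat.add_sub_cancel]
        congr 1
        simp
      calc ν (n + 1) ≤ lam * ν n + ω n := this
        _ ≤ lam * (lam ^ n * ν 0 + c n) + ω n := by linarith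
        _ = lam ^ (n + 1) * ν 0 + (lam * c n + ω n) := by ring
        _ = lam ^ (n + 1) * ν 0 + c (n + 1) := by rw [h3, h4]
  intro k
  have hcnn : ∀ l, 0 ≤ c l := by
    intro l
    apply Finset.sum_nonneg
    intro j _
    exact mul_nonneg (by positivity) (hω j)
  -- squared pointwise bound
  have hsq : ∀ l, (ν l) ^ 2 ≤ 2 * (lam ^ l) ^ 2 * (ν 0) ^ 2 + 2 * (c l) ^ 2 := by
    intro l
    have h1 := hpt l
    have h2 := hν l
    have h3 := hcnn l
    have h4 : (0:ℝ) ≤ lam ^ l * ν 0 := mul_nonneg (by positivity) (hν 0)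
    have h5 : ν l ^ 2 ≤ (lam ^ l * ν 0 + c l) ^ 2 := by nlinarith
    nlinarith [sq_nonneg (lam ^ l * ν 0 - c l)]
  -- Cauchy–Schwarz on each c l
  have hCS : ∀ l, (c l) ^ 2 ≤ (1 / (1 - lam)) *
      ∑ j ∈ Finset.range l, lam ^ (l - 1 - j) * (ω j) ^ 2 := by
    intro l
    have := Finset.sum_sq_le_sum_mul_sum_of_sq_eq_mul (Finset.range l)
      (r := fun j => lam ^ (l - 1 - j) * ω j)
      (f := fun j => lam ^ (l - 1 - j))
      (g := fun j => lam ^ (l - 1 - j) * (ω j) ^ 2)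
      (fun i _ => by positivity)
      (fun i _ => mul_nonneg (by positivity) (sq_nonneg _))
      (fun i _ => by ring)
    refine this.trans ?_
    have hgeo : ∑ j ∈ Finset.range l, lam ^ (l - 1 - j) ≤ 1 / (1 - lam) := by
      rw [← Finset.sum_range_reflect]
      calc ∑ j ∈ Finset.range l, lam ^ (l - 1 - (l - 1 - j))
          ≤ ∑ j ∈ Finset.range l, lam ^ j := by
            apply Finset.sum_le_sum
            intro j hj
            rw [Finset.mem_range] at hj
            have : l - 1 - (l - 1 - j) = j := by omega
            rw [this]
        _ ≤ 1 / (1 - lam) := geom_le_one_div (le_of_lt hl0) hl1 l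
    exact mul_le_mul_of_nonneg_right hgeo (Finset.sum_nonneg fun j _ =>
      mul_nonneg (by positivity) (sq_nonneg _))
  -- swap double sum
  have hswap : ∑ l ∈ Finset.range (k + 2), ∑ j ∈ Finset.range l, lam ^ (l - 1 - j) * (ω j) ^ 2
      ≤ (1 / (1 - lam)) * ∑ j ∈ Finset.range (k + 1), (ω j) ^ 2 := by
    have heq : ∑ l ∈ Finset.range (k + 2), ∑ j ∈ Finset.range l, lam ^ (l - 1 - j) * (ω j) ^ 2
        = ∑ j ∈ Finset.range (k + 2), ∑ l ∈ Finset.Ico (j + 1) (k + 2),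
            lam ^ (l - 1 - j) * (ω j) ^ 2 := by
      simp only [← Nat.Ico_zero_eq_range]
      exact (Finset.sum_Ico_Ico_comm' 0 (k + 2)
        (fun j l => lam ^ (l - 1 - j) * (ω j) ^ 2)).symm
    rw [heq]
    have hlast : ∑ l ∈ Finset.Ico (k + 1 + 1) (k + 2),
        lam ^ (l - 1 - (k+1)) * (ω (k+1)) ^ 2 = 0 := by simp
    rw [Finset.sum_range_succ, hlast, add_zero, Finset.mul_sum]
    apply Finset.sum_le_sum
    intro j hj
    rw [Finset.mem_range] at hj
    have : ∑ l ∈ Finset.Ico (j + 1) (k + 2), lam ^ (l - 1 - j) * (ω j) ^ 2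
        = (∑ l ∈ Finset.Ico (j + 1) (k + 2), lam ^ (l - 1 - j)) * (ω j) ^ 2 := by
      rw [Finset.sum_mul]
    rw [this]
    apply mul_le_mul_of_nonneg_right ?_ (sq_nonneg _)
    rw [Finset.sum_Ico_eq_sum_range]
    calc ∑ i ∈ Finset.range (k + 2 - (j + 1)), lam ^ (j + 1 + i - 1 - j)
        = ∑ i ∈ Finset.range (k + 2 - (j + 1)), lam ^ i := by
          apply Finset.sum_congr rfl
          intro i _
          congr 1
          omega
      _ ≤ 1 / (1 - lam) := geom_le_one_div (le_of_lt hl0) hl1 _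
  -- geometric bound for lam^(2l)
  have hgeom2 : ∑ l ∈ Finset.range (k + 2), (lam ^ l) ^ 2 ≤ 1 / (1 - lam ^ 2) := by
    calc ∑ l ∈ Finset.range (k + 2), (lam ^ l) ^ 2
        = ∑ l ∈ Finset.range (k + 2), (lam ^ 2) ^ l := by
          apply Finset.sum_congr rfl; intro l _; rw [← pow_mul, ← pow_mul, Nat.mul_comm]
      _ ≤ 1 / (1 - lam ^ 2) := geom_le_one_div (by positivity) (by nlinarith) _
  -- main sum bound
  set W := ∑ l ∈ Finset.range (k + 1), (ω l) ^ 2 with hW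
  have hWnn : 0 ≤ W := Finset.sum_nonneg fun j _ => sq_nonneg _
  have hmain : ∑ l ∈ Finset.range (k + 2), (ν l) ^ 2 ≤
      2 / (1 - lam) ^ 2 * W + ν 0 ^ 2 * (2 / (1 - lam ^ 2)) := by
    calc ∑ l ∈ Finset.range (k + 2), (ν l) ^ 2
        ≤ ∑ l ∈ Finset.range (k + 2), (2 * (lam ^ l) ^ 2 * (ν 0) ^ 2 + 2 * (c l) ^ 2) :=
          Finset.sum_le_sum fun l _ => hsq l
      _ = 2 * (ν 0) ^ 2 * (∑ l ∈ Finset.range (k + 2), (lam ^ l) ^ 2)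
          + 2 * ∑ l ∈ Finset.range (k + 2), (c l) ^ 2 := by
          rw [Finset.sum_add_distrib]
          congr 1
          · rw [Finset.mul_sum]; exact Finset.sum_congr rfl fun x _ => by ring
          · rw [Finset.mul_sum]
      _ ≤ 2 * (ν 0) ^ 2 * (1 / (1 - lam ^ 2))
          + 2 * ((1 / (1 - lam)) * ((1 / (1 - lam)) * W)) := by
          have hbc : ∑ l ∈ Finset.range (k + 2), (c l) ^ 2
              ≤ (1 / (1 - lam)) * ((1 / (1 - lam)) * W) := by
            calc ∑ l ∈ Finset.range (k + 2), (c l) ^ 2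
                ≤ ∑ l ∈ Finset.range (k + 2), (1 / (1 - lam)) *
                    ∑ j ∈ Finset.range l, lam ^ (l - 1 - j) * (ω j) ^ 2 :=
                  Finset.sum_le_sum fun l _ => hCS l
              _ = (1 / (1 - lam)) * ∑ l ∈ Finset.range (k + 2),
                    ∑ j ∈ Finset.range l, lam ^ (l - 1 - j) * (ω j) ^ 2 := by
                  rw [Finset.mul_sum]
              _ ≤ (1 / (1 - lam)) * ((1 / (1 - lam)) * W) :=
                  mul_le_mul_of_nonneg_left hswap (by positivity)
          have hbg := mul_le_mul_of_nonneg_left hgeom2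
            (mul_nonneg (by norm_num : (0:ℝ) ≤ 2) (sq_nonneg (ν 0)))
          have hbc2 := mul_le_mul_of_nonneg_left hbc (by norm_num : (0:ℝ) ≤ 2)
          linarith
      _ = 2 / (1 - lam) ^ 2 * W + ν 0 ^ 2 * (2 / (1 - lam ^ 2)) := by
          field_simp
          ring
  -- take square roots
  have h5 := Real.sqrt_le_sqrt hmain
  refine h5.trans ?_
  have hA : (0:ℝ) ≤ 2 / (1 - lam) ^ 2 * W := by positivity
  have hB : (0:ℝ) ≤ ν 0 ^ 2 * (2 / (1 - lam ^ 2)) := by positivity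
  refine (sqrt_add_le' hA hB).trans ?_
  apply add_le_add
  · rw [Real.sqrt_mul (by positivity), Real.sqrt_div (by norm_num : (0:ℝ) ≤ 2),
      Real.sqrt_sq h1lam.le]
  · rw [Real.sqrt_mul (sq_nonneg _), Real.sqrt_sq (hν 0)]
end

section
/- (Lemma 1, bound on x̃) Under the DC-Grad recurrences, for every k ≥ 0: ‖x̃^(k+1)‖ ≤ λ·‖x̃^(k)‖ + λ·α_max·(1 + r_α)·‖z̃^(k)‖ + λ·r_α·‖mean(α^(k)·z^(k))‖. -/
open scoped BigOperators
open Filter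

noncomputable section

/-- Row-space: each agent holds a vector in ℝⁿ (Euclidean). -/
abbrev Vec (n : ℕ) := EuclideanSpace ℝ (Fin n)

/-- A "matrix" in ℝ^{N×n}, represented row-wise. -/
abbrev Mat (N n : ℕ) := Fin N → Vec n

/-- Row-mean operator `B ↦ J·B` with `J = (1/N)·11ᵀ`. -/
def meanM {N n : ℕ} (B : Mat N n) : Mat N n := fun _ => (N : ℝ)⁻¹ • ∑ i, B i

/-- Consensus violation `B̃ = B − B̄`. -/
def tilde {N n : ℕ} (B : Mat N n) : Mat N n := B - meanM B

/-- Frobenius norm of a row-wise matrix. -/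
def fnorm {N n : ℕ} (B : Mat N n) : ℝ := Real.sqrt (∑ i, ‖B i‖ ^ 2)

/-- Spectral norm (ℓ₂ operator norm) of a square matrix. -/
def specNorm {N : ℕ} (A : Matrix (Fin N) (Fin N) ℝ) : ℝ :=
  ‖LinearMap.toContinuousLinearMap (Matrix.toEuclideanLin A)‖

/-- Action of an N×N matrix on a row-wise N×n matrix. -/
def Wact {N n : ℕ} (W : Matrix (Fin N) (Fin N) ℝ) (B : Mat N n) : Mat N n :=
  fun i => ∑ j, W i j • B j

/-- Action of a diagonal matrix `diag a` on a row-wise matrix. -/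
def dAct {N n : ℕ} (a : Fin N → ℝ) (B : Mat N n) : Mat N n := fun i => a i • B i

/-- The matrix of row-wise gradients: i-th row is `∇f_i(x_i)ᵀ`. -/
def gRow {N n : ℕ} (f : Fin N → Vec n → ℝ) (x : Mat N n) : Mat N n :=
  fun i => gradient (f i) (x i)

/-- The all-(1/N) matrix `J = (1/N)·11ᵀ`. -/
def Jmat (N : ℕ) : Matrix (Fin N) (Fin N) ℝ := Matrix.of fun _ _ => (N : ℝ)⁻¹

/-- Double stochasticity of `W`. -/
def DoublyStochastic {N : ℕ} (W : Matrix (Fin N) (Fin N) ℝ) : Prop :=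
  (∀ i, ∑ j, W i j = 1) ∧ (∀ j, ∑ i, W i j = 1)

/-!
Since `W` is doubly stochastic, `x̃^(k+1) = (W − J)·(x^(k) + α^(k) z^(k))~`, so everything reduces
to bounding `‖(α z)~‖`. Split `z = z̃ + z̄`. The part `α z̃` costs at most `α_max ‖z̃‖`, and
`(α z̄)~ = (α − ᾱ) z̄` costs at most `α_max ‖z̄‖` because `0 ≤ α_i, ᾱ ≤ α_max`. Finally `‖z̄‖` is
recovered from the mean of `α z`: `ᾱ z̄ = mean(α z̄) = mean(α z) − mean(α z̃)`, and dividing by `ᾱ`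
is where `r_α ≥ α_max / ᾱ` enters.
-/

section

variable {N n : ℕ}

section Frobenius

lemma fnorm_nonneg (B : Mat N n) : 0 ≤ fnorm B := Real.sqrt_nonneg _

lemma fnorm_eq_norm_toLp (B : Mat N n) : fnorm B = ‖WithLp.toLp 2 B‖ := by
  rw [fnorm, PiLp.norm_eq_of_L2]

lemma fnorm_add_le (B C : Mat N n) : fnorm (B + C) ≤ fnorm B + fnorm C := by
  simpa only [fnorm_eq_norm_toLp, WithLp.toLp_add] using norm_add_le _ _

lemma fnorm_sub_le (B C : Mat N n) : fnorm (B - C) ≤ fnorm B + fnorm C := by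
  simpa only [fnorm_eq_norm_toLp, WithLp.toLp_sub] using norm_sub_le _ _

lemma fnorm_smul (c : ℝ) (B : Mat N n) : fnorm (c • B) = |c| * fnorm B := by
  simp only [fnorm_eq_norm_toLp, WithLp.toLp_smul, norm_smul, Real.norm_eq_abs]

lemma fnorm_le_of_sum_norm_sq_le {B C : Mat N n} {c : ℝ} (hc : 0 ≤ c)
    (h : ∑ i, ‖B i‖ ^ 2 ≤ c ^ 2 * ∑ i, ‖C i‖ ^ 2) : fnorm B ≤ c * fnorm C := by
  rw [fnorm, fnorm, ← Real.sqrt_sq hc, ← Real.sqrt_mul (sq_nonneg c)]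
  exact Real.sqrt_le_sqrt h

lemma fnorm_dAct_le {a : Fin N → ℝ} {c : ℝ} (hc : 0 ≤ c) (ha : ∀ i, |a i| ≤ c) (B : Mat N n) :
    fnorm (dAct a B) ≤ c * fnorm B := by
  refine fnorm_le_of_sum_norm_sq_le hc ?_
  rw [Finset.mul_sum]
  refine Finset.sum_le_sum fun i _ => ?_
  rw [dAct, norm_smul, mul_pow, Real.norm_eq_abs]
  gcongr
  exact ha i

end Frobenius

section Spectral

lemma specNorm_nonneg (A : Matrix (Fin N) (Fin N) ℝ) : 0 ≤ specNorm A := norm_nonneg _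

lemma abs_le_specNorm_diagonal (a : Fin N → ℝ) (i : Fin N) :
    |a i| ≤ specNorm (Matrix.diagonal a) := by
  have h := (LinearMap.toContinuousLinearMap (Matrix.toEuclideanLin (Matrix.diagonal a))).le_opNorm
    (WithLp.toLp 2 (Pi.single i 1))
  rwa [LinearMap.coe_toContinuousLinearMap', Matrix.toLpLin_apply, WithLp.ofLp_toLp,
    Matrix.diagonal_mulVec_single, mul_one, PiLp.toLp_single, PiLp.toLp_single, PiLp.norm_single,
    PiLp.norm_single, norm_one, mul_one, Real.norm_eq_abs] at h

lemma sum_norm_sq_eq_sum_norm_sq_col (B : Mat N n) :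
    ∑ i, ‖B i‖ ^ 2 = ∑ c, ‖(WithLp.toLp 2 fun i => B i c : EuclideanSpace ℝ (Fin N))‖ ^ 2 := by
  simp only [EuclideanSpace.norm_sq_eq, Real.norm_eq_abs, sq_abs]
  exact Finset.sum_comm

-- `Wact A` acts on each column separately, so the operator bound applies column by column.
lemma fnorm_wact_le (A : Matrix (Fin N) (Fin N) ℝ) (B : Mat N n) :
    fnorm (Wact A B) ≤ specNorm A * fnorm B := by
  refine fnorm_le_of_sum_norm_sq_le (specNorm_nonneg A) ?_
  have hcol : ∀ c, (WithLp.toLp 2 fun i => Wact A B i c : EuclideanSpace ℝ (Fin N))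
      = Matrix.toEuclideanLin A (WithLp.toLp 2 fun j => B j c) := by
    intro c
    ext i
    simp [Wact, Matrix.mulVec, dotProduct]
  rw [sum_norm_sq_eq_sum_norm_sq_col (Wact A B), sum_norm_sq_eq_sum_norm_sq_col B, Finset.mul_sum]
  refine Finset.sum_le_sum fun c _ => ?_
  rw [hcol, ← mul_pow]
  gcongr
  exact (LinearMap.toContinuousLinearMap _).le_opNorm _

end Spectral

section Consensus

lemma meanM_add (B C : Mat N n) : meanM (B + C) = meanM B + meanM C := by
  funext i
  simp [meanM, Finset.sum_add_distrib]

lemma tilde_add (B C : Mat N n) : tilde (B + C) = tilde B + tilde C := by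
  rw [tilde, tilde, tilde, meanM_add]
  abel

lemma tilde_add_meanM (B : Mat N n) : tilde B + meanM B = B := sub_add_cancel B (meanM B)

lemma sum_eq_natCast_smul_mean [NeZero N] (B : Mat N n) :
    ∑ i, B i = (N : ℝ) • ((N : ℝ)⁻¹ • ∑ i, B i) := by
  rw [smul_smul, mul_inv_cancel₀ (NeZero.ne _), one_smul]

lemma meanM_tilde [NeZero N] (B : Mat N n) : meanM (tilde B) = 0 := by
  funext i
  simp only [meanM, tilde, Pi.sub_apply, Finset.sum_sub_distrib, Finset.sum_const,
    Finset.card_univ, Fintype.card_fin, ← Nat.cast_smul_eq_nsmul ℝ, ← sum_eq_natCast_smul_mean,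
    sub_self, smul_zero, Pi.zero_apply]

lemma sum_norm_sq_tilde_add_meanM [NeZero N] (B : Mat N n) :
    ∑ i, ‖tilde B i‖ ^ 2 + ∑ i, ‖meanM B i‖ ^ 2 = ∑ i, ‖B i‖ ^ 2 := by
  set v : Vec n := (N : ℝ)⁻¹ • ∑ i, B i
  have hsum : ∑ i, B i = (N : ℝ) • v := sum_eq_natCast_smul_mean B
  have htilde : ∀ i, ‖tilde B i‖ ^ 2 = ‖B i‖ ^ 2 - 2 * inner ℝ (B i) v + ‖v‖ ^ 2 :=
    fun i => norm_sub_sq_real (B i) v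
  have hmean : ∀ i, meanM B i = v := fun _ => rfl
  simp only [htilde, hmean, Finset.sum_add_distrib, Finset.sum_sub_distrib, ← Finset.mul_sum,
    ← sum_inner, hsum, real_inner_smul_left, real_inner_self_eq_norm_sq, Finset.sum_const,
    Finset.card_univ, Fintype.card_fin, nsmul_eq_mul]
  ring

lemma fnorm_tilde_le [NeZero N] (B : Mat N n) : fnorm (tilde B) ≤ fnorm B :=
  Real.sqrt_le_sqrt <| by
    linarith [sum_norm_sq_tilde_add_meanM B, Finset.sum_nonneg fun i (_ : i ∈ Finset.univ) =>
      sq_nonneg ‖meanM B i‖]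

lemma fnorm_meanM_le [NeZero N] (B : Mat N n) : fnorm (meanM B) ≤ fnorm B :=
  Real.sqrt_le_sqrt <| by
    linarith [sum_norm_sq_tilde_add_meanM B, Finset.sum_nonneg fun i (_ : i ∈ Finset.univ) =>
      sq_nonneg ‖tilde B i‖]

lemma wact_sub_left (A A' : Matrix (Fin N) (Fin N) ℝ) (B : Mat N n) :
    Wact (A - A') B = Wact A B - Wact A' B := by
  funext i
  simp [Wact, sub_smul, Finset.sum_sub_distrib]

lemma wact_sub_right (A : Matrix (Fin N) (Fin N) ℝ) (B C : Mat N n) :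
    Wact A (B - C) = Wact A B - Wact A C := by
  funext i
  simp [Wact, smul_sub, Finset.sum_sub_distrib]

lemma wact_Jmat (B : Mat N n) : Wact (Jmat N) B = meanM B := by
  funext i
  simp [Wact, Jmat, meanM, Finset.smul_sum]

lemma wact_meanM {W : Matrix (Fin N) (Fin N) ℝ} (hW : ∀ i, ∑ j, W i j = 1) (B : Mat N n) :
    Wact W (meanM B) = meanM B := by
  funext i
  simp [Wact, meanM, ← Finset.sum_smul, hW]

lemma meanM_wact {W : Matrix (Fin N) (Fin N) ℝ} (hW : ∀ j, ∑ i, W i j = 1) (B : Mat N n) :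
    meanM (Wact W B) = meanM B := by
  funext i
  simp only [meanM, Wact]
  rw [Finset.sum_comm]
  simp [← Finset.sum_smul, hW]

lemma tilde_wact [NeZero N] {W : Matrix (Fin N) (Fin N) ℝ} (hW : DoublyStochastic W)
    (B : Mat N n) : tilde (Wact W B) = Wact (W - Jmat N) (tilde B) := by
  rw [wact_sub_left, wact_Jmat, meanM_tilde, sub_zero, tilde, tilde, wact_sub_right,
    wact_meanM hW.1, meanM_wact hW.2]

lemma meanM_dAct_meanM (a : Fin N → ℝ) (B : Mat N n) :
    meanM (dAct a (meanM B)) = ((N : ℝ)⁻¹ * ∑ i, a i) • meanM B := by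
  funext i
  simp only [meanM, dAct, ← Finset.sum_smul, smul_smul, Pi.smul_apply, ← Finset.sum_mul]
  ring_nf

lemma tilde_dAct_meanM (a : Fin N → ℝ) (B : Mat N n) :
    tilde (dAct a (meanM B)) = dAct (fun i => a i - (N : ℝ)⁻¹ * ∑ j, a j) (meanM B) := by
  rw [tilde, meanM_dAct_meanM]
  funext i
  simp [dAct, sub_smul]

end Consensus

lemma fnorm_tilde_dAct_le [NeZero N] {a : Fin N → ℝ} {αmax rα : ℝ} (ha : ∀ i, 0 ≤ a i)
    (haM : ∀ i, a i ≤ αmax) (hā : 0 < (N : ℝ)⁻¹ * ∑ i, a i)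
    (hr : αmax / ((N : ℝ)⁻¹ * ∑ i, a i) ≤ rα) (z : Mat N n) :
    fnorm (tilde (dAct a z)) ≤
      αmax * (1 + rα) * fnorm (tilde z) + rα * fnorm (meanM (dAct a z)) := by
  set ā := (N : ℝ)⁻¹ * ∑ i, a i
  have hαmax : 0 ≤ αmax := (ha 0).trans (haM 0)
  have hāM : ā ≤ αmax := by
    rw [inv_mul_le_iff₀ (Nat.cast_pos.mpr (Nat.pos_of_neZero N))]
    simpa using Finset.sum_le_sum fun i (_ : i ∈ Finset.univ) => haM i
  have hrα : 0 ≤ rα := (div_nonneg hαmax hā.le).trans hr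
  have hsplit : dAct a z = dAct a (tilde z) + dAct a (meanM z) := by
    conv_lhs => rw [← tilde_add_meanM z]
    funext i
    exact smul_add _ _ _
  have hdAct_tilde : fnorm (dAct a (tilde z)) ≤ αmax * fnorm (tilde z) :=
    fnorm_dAct_le hαmax (fun i => (abs_of_nonneg (ha i)).trans_le (haM i)) _
  have hmean : ā * fnorm (meanM z) ≤ fnorm (meanM (dAct a z)) + αmax * fnorm (tilde z) :=
    calc ā * fnorm (meanM z) = fnorm (meanM (dAct a (meanM z))) := by
          rw [meanM_dAct_meanM, fnorm_smul, abs_of_pos hā]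
      _ = fnorm (meanM (dAct a z) - meanM (dAct a (tilde z))) := by
          rw [hsplit, meanM_add, add_sub_cancel_left]
      _ ≤ fnorm (meanM (dAct a z)) + αmax * fnorm (tilde z) :=
          (fnorm_sub_le _ _).trans (add_le_add le_rfl ((fnorm_meanM_le _).trans hdAct_tilde))
  have hdev : fnorm (tilde (dAct a (meanM z))) ≤
      rα * (fnorm (meanM (dAct a z)) + αmax * fnorm (tilde z)) :=
    calc fnorm (tilde (dAct a (meanM z))) ≤ αmax * fnorm (meanM z) := by
          rw [tilde_dAct_meanM]
          exact fnorm_dAct_le hαmax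
            (fun i => abs_sub_le_of_nonneg_of_le (ha i) (haM i) hā.le hāM) _
      _ = αmax / ā * (ā * fnorm (meanM z)) := by field_simp
      _ ≤ rα * (fnorm (meanM (dAct a z)) + αmax * fnorm (tilde z)) :=
          mul_le_mul hr hmean (mul_nonneg hā.le (fnorm_nonneg _)) hrα
  calc fnorm (tilde (dAct a z))
      = fnorm (tilde (dAct a (tilde z)) + tilde (dAct a (meanM z))) := by rw [← tilde_add, ← hsplit]
    _ ≤ αmax * fnorm (tilde z) + rα * (fnorm (meanM (dAct a z)) + αmax * fnorm (tilde z)) :=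
        (fnorm_add_le _ _).trans (add_le_add ((fnorm_tilde_le _).trans hdAct_tilde) hdev)
    _ = αmax * (1 + rα) * fnorm (tilde z) + rα * fnorm (meanM (dAct a z)) := by ring

end

theorem stmt4_general (N n : ℕ) (hN : 1 ≤ N)
    (W : Matrix (Fin N) (Fin N) ℝ) (hW : DoublyStochastic W)
    (lam : ℝ) (hlam : lam = specNorm (W - Jmat N))
    (α : ℕ → Fin N → ℝ) (hα : ∀ k i, 0 ≤ α k i)
    (hαbar : ∀ k, 0 < (N : ℝ)⁻¹ * ∑ i, α k i)
    (αmax rα : ℝ)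
    (hαmax : ∀ k, specNorm (Matrix.diagonal (α k)) ≤ αmax)
    (hrα : ∀ k, αmax / ((N : ℝ)⁻¹ * ∑ i, α k i) ≤ rα)
    (x z : ℕ → Mat N n)
    (hx : ∀ k, x (k + 1) = Wact W (x k + dAct (α k) (z k))) :
    ∀ k, fnorm (tilde (x (k + 1))) ≤
      lam * fnorm (tilde (x k)) + lam * αmax * (1 + rα) * fnorm (tilde (z k))
        + lam * rα * fnorm (meanM (dAct (α k) (z k))) := by
  intro k
  have : NeZero N := ⟨by omega⟩
  have hαM : ∀ i, α k i ≤ αmax :=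
    fun i => (le_abs_self _).trans ((abs_le_specNorm_diagonal (α k) i).trans (hαmax k))
  have hstep := fnorm_tilde_dAct_le (hα k) hαM (hαbar k) (hrα k) (z k)
  calc fnorm (tilde (x (k + 1)))
      = fnorm (Wact (W - Jmat N) (tilde (x k) + tilde (dAct (α k) (z k)))) := by
        rw [hx k, tilde_wact hW, tilde_add]
    _ ≤ lam * (fnorm (tilde (x k)) + (αmax * (1 + rα) * fnorm (tilde (z k))
          + rα * fnorm (meanM (dAct (α k) (z k))))) := by
        rw [hlam]
        exact (fnorm_wact_le _ _).trans <| mul_le_mul_of_nonneg_left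
          ((fnorm_add_le _ _).trans (add_le_add le_rfl hstep)) (specNorm_nonneg _)
    _ = _ := by ring

/-- Lemma 1 (bound on `x̃`): under the DC-Grad `x`-recurrence with doubly stochastic `W`,
`λ = ‖W − J‖₂`, `α_max ≥ ‖α^(k)‖₂` and `r_α ≥ α_max/‖ᾱ^(k)‖₂` for all `k`:
`‖x̃^(k+1)‖ ≤ λ‖x̃^(k)‖ + λ·α_max(1+r_α)‖z̃^(k)‖ + λ·r_α‖mean(α^(k)z^(k))‖`. -/
theorem stmt4 (N n : ℕ) (hN : 1 ≤ N) (hn : 1 ≤ n)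
    (W : Matrix (Fin N) (Fin N) ℝ) (hW : DoublyStochastic W)
    (lam : ℝ) (hlam : lam = specNorm (W - Jmat N))
    (α : ℕ → Fin N → ℝ) (hα : ∀ k i, 0 ≤ α k i)
    (hαbar : ∀ k, 0 < (N : ℝ)⁻¹ * ∑ i, α k i)
    (αmax rα : ℝ)
    (hαmax : ∀ k, specNorm (Matrix.diagonal (α k)) ≤ αmax)
    (hrα : ∀ k, αmax / ((N : ℝ)⁻¹ * ∑ i, α k i) ≤ rα)
    (x z : ℕ → Mat N n)
    (hx : ∀ k, x (k + 1) = Wact W (x k + dAct (α k) (z k))) :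
    ∀ k, fnorm (tilde (x (k + 1))) ≤
      lam * fnorm (tilde (x k)) + lam * αmax * (1 + rα) * fnorm (tilde (z k))
        + lam * rα * fnorm (meanM (dAct (α k) (z k))) :=
  stmt4_general N n hN W hW lam hlam α hα hαbar αmax rα hαmax hrα x z hx
end
end

section
/- Assume each f_i is convex and differentiable with L_i-Lipschitz gradient, and let x* be a global minimizer of f(x) = (1/N)·Σ_i f_i(x) with f* = f(x*). Then for every x^(k) ∈ ℝ^{N×n}, writing X* = 1·(x*)ᵀ ∈ ℝ^{N×n}: f̄(x̄^(k)) − f* ≤ (1/N)·(‖ḡ^(k)‖ + L·‖x̃^(k)‖)·‖x̄^(k) − X*‖. -/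
/-!
Write `m` for the row mean of `x`. Convexity gives `fᵢ(m) − fᵢ(x*) ≤ ⟪∇fᵢ(m), m − x*⟫`, so by
Cauchy–Schwarz `f̄(x̄) − f* ≤ N⁻¹ ‖∑ᵢ ∇fᵢ(m)‖ ‖m − x*‖`. Smoothness replaces `∑ᵢ ∇fᵢ(m)` by
`∑ᵢ ∇fᵢ(xᵢ) = N ḡ` at the cost of `L ∑ᵢ ‖xᵢ − m‖ ≤ L √N ‖x̃‖`, and the Frobenius norm of a
matrix with identical rows `v` is `√N ‖v‖`.
-/

open scoped BigOperators
open Filter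

noncomputable section

/-- The aggregate objective `f̄(x) = (1/N)Σᵢ fᵢ(xᵢ)` over the rows of `x`. -/
def fbar {N n : ℕ} (f : Fin N → Vec n → ℝ) (x : Mat N n) : ℝ :=
  (N : ℝ)⁻¹ * ∑ i, f i (x i)

theorem ConvexOn.sub_le_of_hasFDerivAt {E : Type*} [NormedAddCommGroup E] [NormedSpace ℝ E]
    {s : Set E} {f : E → ℝ} {f' : E →L[ℝ] ℝ} {a b : E} (hc : ConvexOn ℝ s f)
    (ha : a ∈ s) (hb : b ∈ s) (hf : HasFDerivAt f f' a) :
    f a - f b ≤ f' (a - b) := by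
  set ℓ : ℝ →ᵃ[ℝ] E := AffineMap.lineMap b a
  have hℓ0 : ℓ 0 = b := AffineMap.lineMap_apply_zero b a
  have hℓ1 : ℓ 1 = a := AffineMap.lineMap_apply_one b a
  have hderiv : HasDerivAt (f ∘ ℓ) (f' (a - b)) 1 :=
    (hℓ1 ▸ hf).comp_hasDerivAt 1 AffineMap.hasDerivAt_lineMap
  have hslope := (hc.comp_affineMap ℓ).slope_le_of_hasDerivAt
    (by simpa [hℓ0] using hb) (by simpa [hℓ1] using ha) zero_lt_one hderiv
  simpa [slope_def_field, hℓ0, hℓ1] using hslope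

theorem ConvexOn.sub_le_inner_of_hasGradientAt {E : Type*} [NormedAddCommGroup E]
    [InnerProductSpace ℝ E] [CompleteSpace E] {s : Set E} {f : E → ℝ} {g a b : E}
    (hc : ConvexOn ℝ s f) (ha : a ∈ s) (hb : b ∈ s) (hf : HasGradientAt f g a) :
    f a - f b ≤ inner ℝ g (a - b) :=
  hc.sub_le_of_hasFDerivAt ha hb (hasGradientAt_iff_hasFDerivAt.mp hf)

theorem norm_sum_le_norm_sum_add_mul_sum_norm_sub {ι E F : Type*} [SeminormedAddCommGroup E]
    [SeminormedAddCommGroup F] (s : Finset ι) (g : ι → E → F) {L : ℝ}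
    (hg : ∀ i y w, ‖g i y - g i w‖ ≤ L * ‖y - w‖) (m : E) (x : ι → E) :
    ‖∑ i ∈ s, g i m‖ ≤ ‖∑ i ∈ s, g i (x i)‖ + L * ∑ i ∈ s, ‖x i - m‖ := by
  have hsplit : ∑ i ∈ s, g i m = ∑ i ∈ s, g i (x i) + ∑ i ∈ s, (g i m - g i (x i)) := by
    rw [Finset.sum_sub_distrib]; abel
  calc ‖∑ i ∈ s, g i m‖
      ≤ ‖∑ i ∈ s, g i (x i)‖ + ∑ i ∈ s, ‖g i m - g i (x i)‖ :=
        hsplit ▸ (norm_add_le _ _).trans (add_le_add_right (norm_sum_le _ _) _)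
    _ ≤ ‖∑ i ∈ s, g i (x i)‖ + L * ∑ i ∈ s, ‖x i - m‖ := by
        rw [Finset.mul_sum]
        gcongr with i
        exact (hg i m (x i)).trans_eq (by rw [norm_sub_rev])

theorem fnorm_const {N n : ℕ} (v : Vec n) :
    fnorm (fun _ : Fin N => v) = Real.sqrt N * ‖v‖ := by
  simp only [fnorm, Finset.sum_const, Finset.card_univ, Fintype.card_fin, nsmul_eq_mul]
  rw [Real.sqrt_mul (Nat.cast_nonneg N), Real.sqrt_sq (norm_nonneg v)]

theorem sum_norm_le_sqrt_mul_fnorm {N n : ℕ} (B : Mat N n) :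
    ∑ i, ‖B i‖ ≤ Real.sqrt N * fnorm B := by
  have hcs : (∑ i, ‖B i‖) ^ 2 ≤ N * ∑ i, ‖B i‖ ^ 2 := by
    simpa using sq_sum_le_card_mul_sum_sq (s := Finset.univ) (f := fun i => ‖B i‖)
  rw [fnorm, ← Real.sqrt_mul (Nat.cast_nonneg N)]
  exact Real.le_sqrt_of_sq_le hcs

theorem stmt18_general (N n : ℕ)
    (f : Fin N → Vec n → ℝ) (hf : ∀ i, Differentiable ℝ (f i))
    (hconv : ∀ i, ConvexOn ℝ Set.univ (f i))
    (L : ℝ) (hL : 0 ≤ L)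
    (hLip : ∀ i, ∀ y w : Vec n, ‖gradient (f i) y - gradient (f i) w‖ ≤ L * ‖y - w‖)
    (xstar : Vec n) (fstar : ℝ)
    (hfstar : fstar = (N : ℝ)⁻¹ * ∑ i, f i xstar)
    (x : Mat N n) :
    fbar f (meanM x) - fstar ≤
      (N : ℝ)⁻¹ * (fnorm (meanM (gRow f x)) + L * fnorm (tilde x))
        * fnorm (meanM x - fun _ => xstar) := by
  set m : Vec n := (N : ℝ)⁻¹ • ∑ i, x i
  set G : Vec n := ∑ i, gradient (f i) (x i)
  have hconvex : ∑ i, (f i m - f i xstar) ≤ inner ℝ (∑ i, gradient (f i) m) (m - xstar) := by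
    rw [sum_inner]
    exact Finset.sum_le_sum fun i _ => (hconv i).sub_le_inner_of_hasGradientAt
      (Set.mem_univ _) (Set.mem_univ _) (hf i m).hasGradientAt
  have hgrad : ‖∑ i, gradient (f i) m‖ ≤ ‖G‖ + L * (Real.sqrt N * fnorm (tilde x)) :=
    (norm_sum_le_norm_sum_add_mul_sum_norm_sub _ _ hLip m x).trans
      (by gcongr; exact sum_norm_le_sqrt_mul_fnorm (tilde x))
  have hsqrt : Real.sqrt N * Real.sqrt N = N := Real.mul_self_sqrt (Nat.cast_nonneg N)
  -- holds for `N = 0` too (`0⁻¹ = 0`), so the degenerate case needs no separate treatment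
  have hinv : (N : ℝ)⁻¹ * N * (N : ℝ)⁻¹ = (N : ℝ)⁻¹ := by
    simpa only [inv_inv] using mul_inv_mul_cancel (N : ℝ)⁻¹
  calc fbar f (meanM x) - fstar = (N : ℝ)⁻¹ * ∑ i, (f i m - f i xstar) := by
        rw [fbar, hfstar, Finset.sum_sub_distrib, mul_sub]; rfl
    _ ≤ (N : ℝ)⁻¹ * ((‖G‖ + L * (Real.sqrt N * fnorm (tilde x))) * ‖m - xstar‖) := by
        gcongr
        exact hconvex.trans <| (real_inner_le_norm _ _).trans <|
          mul_le_mul_of_nonneg_right hgrad (norm_nonneg _)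
    _ = _ := by
        have hgbar : meanM (gRow f x) = fun _ => (N : ℝ)⁻¹ • G := rfl
        have hdist : (meanM x - fun _ => xstar) = fun _ => m - xstar := rfl
        rw [hgbar, hdist, fnorm_const, fnorm_const, norm_smul,
          Real.norm_of_nonneg (by positivity)]
        linear_combination
          -((N : ℝ)⁻¹ * (N : ℝ)⁻¹ * ‖G‖ * ‖m - xstar‖) * hsqrt - ‖G‖ * ‖m - xstar‖ * hinv

/-- Convexity bound towards the optimum: for convex `L`-smooth `fᵢ` with aggregate
minimizer `x*`, and any `x ∈ ℝ^{N×n}` (writing `X* = 1·(x*)ᵀ`):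
`f̄(x̄) − f* ≤ (1/N)(‖ḡ‖ + L‖x̃‖)‖x̄ − X*‖`. -/
theorem stmt18 (N n : ℕ) (hN : 1 ≤ N) (hn : 1 ≤ n)
    (f : Fin N → Vec n → ℝ) (hf : ∀ i, Differentiable ℝ (f i))
    (hconv : ∀ i, ConvexOn ℝ Set.univ (f i))
    (L : ℝ) (hL : 0 ≤ L)
    (hLip : ∀ i, ∀ y w : Vec n, ‖gradient (f i) y - gradient (f i) w‖ ≤ L * ‖y - w‖)
    (xstar : Vec n) (fstar : ℝ)
    (hfstar : fstar = (N : ℝ)⁻¹ * ∑ i, f i xstar)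
    (hmin : ∀ y : Vec n, fstar ≤ (N : ℝ)⁻¹ * ∑ i, f i y)
    (x : Mat N n) :
    fbar f (meanM x) - fstar ≤
      (N : ℝ)⁻¹ * (fnorm (meanM (gRow f x)) + L * fnorm (tilde x))
        * fnorm (meanM x - fun _ => xstar) :=
  stmt18_general N n f hf hconv L hL hLip xstar fstar hfstar x
end
end
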